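/- Let h(m⃗) denote the minimum of Σ_{v hybrid} (indeg(v) − 1) over all phylogenetic networks realizing a ploidy profile m⃗ = (m₁,…,mₙ). Then h(m⃗) ≤ Σ_{k=1}^{n} (⌊log₂ m_k⌋ + s₂(m_k) − 1), where s₂ denotes binary digit-sum and terms with m_k = 1 contribute 0. -/

import Mathlib

/-- A directed path in a multidigraph with arc multiplicities `arcs`. -/
inductive PathIn (V : Type) (arcs : V → V → ℕ) : V → V → Type
  | nil (v : V) : PathIn V arcs v v
  | cons {u v w : V} (e : Fin (arcs u v)) (p : PathIn V arcs v w) : PathIn V arcs u w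

/-- A finite rooted directed acyclic multigraph (parallel arcs allowed, no loops by acyclicity);
the field `rank` witnesses acyclicity via a topological order. -/
structure PhyloNet where
  V : Type
  fin : Fintype V
  root : V
  arcs : V → V → ℕ
  rank : V → ℕ
  rank_lt : ∀ u v : V, 0 < arcs u v → rank u < rank v

attribute [instance] PhyloNet.fin

namespace PhyloNet

def indeg (N : PhyloNet) (v : N.V) : ℕ := ∑ u : N.V, N.arcs u v

def outdeg (N : PhyloNet) (v : N.V) : ℕ := ∑ u : N.V, N.arcs v u

/-- The number of directed paths from `u` to `v`. -/
noncomputable def pathCount (N : PhyloNet) (u v : N.V) : ℕ := Nat.card (PathIn N.V N.arcs u v)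

def IsLeaf (N : PhyloNet) (v : N.V) : Prop := N.indeg v = 1 ∧ N.outdeg v = 0

/-- A binary phylogenetic network: root indeg 0 outdeg 2; other vertices are leaves,
tree vertices, or (binary) hybrid vertices. -/
def IsBinary (N : PhyloNet) : Prop :=
  N.indeg N.root = 0 ∧ N.outdeg N.root = 2 ∧
  ∀ v : N.V, v ≠ N.root →
    (N.indeg v = 1 ∧ N.outdeg v = 0) ∨
    (N.indeg v = 1 ∧ N.outdeg v = 2) ∨
    (N.indeg v = 2 ∧ N.outdeg v = 1)

/-- A (general) phylogenetic network: hybrid vertices may have indegree ≥ 2. -/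
def IsPhylo (N : PhyloNet) : Prop :=
  N.indeg N.root = 0 ∧ N.outdeg N.root = 2 ∧
  ∀ v : N.V, v ≠ N.root →
    (N.indeg v = 1 ∧ N.outdeg v = 0) ∨
    (N.indeg v = 1 ∧ N.outdeg v = 2) ∨
    (2 ≤ N.indeg v ∧ N.outdeg v = 1)

/-- The number of hybrid vertices. -/
noncomputable def hybridCard (N : PhyloNet) : ℕ := Nat.card {v : N.V // 2 ≤ N.indeg v}

/-- The hybrid number `h(N) = ∑_{h hybrid} (indeg h − 1)`; vertices of indegree ≤ 1
contribute 0 via truncated subtraction. -/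
def hybridNumber (N : PhyloNet) : ℕ := ∑ v : N.V, (N.indeg v - 1)

/-- `x` is the unique leaf of `N`. -/
def SingleLeaf (N : PhyloNet) (x : N.V) : Prop := N.IsLeaf x ∧ ∀ y : N.V, N.IsLeaf y → y = x

/-- `N` realizes the ploidy profile `m`: its leaves can be indexed so that the number of
root-to-leaf directed paths to the `i`-th leaf is `m i`. -/
def Realizes (N : PhyloNet) {n : ℕ} (m : Fin n → ℕ) : Prop :=
  ∃ x : Fin n → N.V, Function.Injective x ∧ (∀ v : N.V, N.IsLeaf v ↔ ∃ i, x i = v) ∧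
    ∀ i, N.pathCount N.root (x i) = m i

/-- The hybrid number of a ploidy profile. -/
noncomputable def profileHybridNumber {n : ℕ} (m : Fin n → ℕ) : ℕ :=
  sInf {h : ℕ | ∃ N : PhyloNet, N.IsPhylo ∧ N.Realizes m ∧ N.hybridNumber = h}

end PhyloNet


/-!
The one-leaf network `B(m)` is built by recursion on `m`. `B(1)` is a single vertex. `B(2k)` puts
a new root `r` and a new hybrid `h` with arcs `r ⇉ h → root` on top of `B(k)`: every path count
from the root doubles and the hybrid number grows by one. `B(2k+1)` puts on top of `B(2k)` a new
root with one arc to the old root and one to the hybrid just above the leaf, which adds one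
path and one to the hybrid number. Since `⌊log₂ m⌋ + s₂(m)` grows by `1 + (m mod 2)` from
`⌊m/2⌋` to `m`, this gives `h(B(m)) = ⌊log₂ m⌋ + s₂(m) − 1`. Joining the `B(m_k)` under new roots
one at a time realizes `m⃗`, and hybrid numbers add.

When `∑ m_k < 2` no network realizes `m⃗` (both arcs out of the root lead to leaves), and
`h(m⃗) = sInf ∅ = 0`.
-/

open scoped Classical

namespace PhyloNet

variable (N : PhyloNet)

theorem rank_le_of_path {u v : N.V} (p : PathIn N.V N.arcs u v) : N.rank u ≤ N.rank v := by
  induction p with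
  | nil => exact le_rfl
  | cons e _ ih => exact (N.rank_lt _ _ e.pos).le.trans ih

theorem wellFounded_arcs : WellFounded fun w u : N.V => 0 < N.arcs u w :=
  Subrelation.wf
    (fun {w u} h => show Finset.univ.sup N.rank - N.rank w < Finset.univ.sup N.rank - N.rank u by
      have := N.rank_lt u w h
      have := Finset.le_sup (f := N.rank) (Finset.mem_univ w)
      omega)
    (measure fun u => Finset.univ.sup N.rank - N.rank u).wf

theorem induction_arcs {P : N.V → Prop} (h : ∀ u, (∀ w, 0 < N.arcs u w → P w) → P u)
    (u : N.V) : P u :=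
  N.wellFounded_arcs.induction u h

instance (u : N.V) : Unique (PathIn N.V N.arcs u u) where
  default := .nil u
  uniq
    | .nil _ => rfl
    | .cons e q => absurd (N.rank_le_of_path q) (not_le.mpr (N.rank_lt _ _ e.pos))

def pathConsEquiv {u v : N.V} (h : u ≠ v) :
    PathIn N.V N.arcs u v ≃ Σ w, Fin (N.arcs u w) × PathIn N.V N.arcs w v where
  toFun p := match p with
    | .nil _ => absurd rfl h
    | .cons e q => ⟨_, e, q⟩
  invFun x := .cons x.2.1 x.2.2
  left_inv p := by
    cases p with
    | nil => exact absurd rfl h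
    | cons => rfl
  right_inv _ := rfl

instance (u v : N.V) : Finite (PathIn N.V N.arcs u v) := by
  induction u using N.induction_arcs with
  | h u ih =>
    by_cases huv : u = v
    · subst huv; infer_instance
    · have (w : N.V) : Finite (Fin (N.arcs u w) × PathIn N.V N.arcs w v) := by
        rcases Nat.eq_zero_or_pos (N.arcs u w) with h0 | hpos
        · rw [h0]; infer_instance
        · have := ih w hpos; infer_instance
      exact Finite.of_equiv _ (N.pathConsEquiv huv).symm

theorem pathCount_self (u : N.V) : N.pathCount u u = 1 :=
  Nat.card_unique

theorem pathCount_of_ne {u v : N.V} (h : u ≠ v) :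
    N.pathCount u v = ∑ w, N.arcs u w * N.pathCount w v := by
  rw [pathCount, Nat.card_congr (N.pathConsEquiv h), Nat.card_sigma]
  simp [Nat.card_prod, pathCount]

theorem pathCount_eq_zero_of_closed (S : Set N.V) (hS : ∀ u ∈ S, ∀ w, 0 < N.arcs u w → w ∈ S)
    {u v : N.V} (hu : u ∈ S) (hv : v ∉ S) : N.pathCount u v = 0 := by
  have reach {u v : N.V} (p : PathIn N.V N.arcs u v) : u ∈ S → v ∈ S := by
    induction p with
    | nil => exact id
    | cons e _ ih => exact fun hu => ih (hS _ hu _ e.pos)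
  have : IsEmpty (PathIn N.V N.arcs u v) := ⟨fun p => hv (reach p hu)⟩
  exact Nat.card_of_isEmpty

theorem pathCount_map {M : PhyloNet} (φ : N.V → M.V) (hφ : Function.Injective φ)
    (harcs : ∀ u w, M.arcs (φ u) (φ w) = N.arcs u w)
    (hclosed : ∀ u t, t ∉ Set.range φ → M.arcs (φ u) t = 0) (u v : N.V) :
    M.pathCount (φ u) (φ v) = N.pathCount u v := by
  induction u using N.induction_arcs with
  | h u ih =>
    by_cases huv : u = v
    · rw [huv, pathCount_self, pathCount_self]
    rw [M.pathCount_of_ne (hφ.ne huv), N.pathCount_of_ne huv]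
    refine (Fintype.sum_of_injective φ hφ _ _ (fun t ht => by rw [hclosed u t ht, zero_mul])
      fun w => ?_).symm
    rw [harcs]
    rcases Nat.eq_zero_or_pos (N.arcs u w) with h0 | hpos
    · rw [h0, zero_mul, zero_mul]
    · rw [ih w hpos]

section addRoot

abbrev addRoot (a : N.V → ℕ) : PhyloNet where
  V := Option N.V
  fin := inferInstance
  root := none
  arcs
    | none, some v => a v
    | some u, some v => N.arcs u v
    | _, none => 0
  rank
    | none => 0
    | some v => N.rank v + 1
  rank_lt
    | none, some _, _ => Nat.succ_pos _
    | some u, some v, h => Nat.succ_lt_succ (N.rank_lt u v h)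

variable {N} (a : N.V → ℕ)

@[simp] theorem indeg_addRoot_none : (N.addRoot a).indeg none = 0 := by
  simp [indeg, addRoot]

@[simp] theorem indeg_addRoot_some (v : N.V) :
    (N.addRoot a).indeg (some v) = a v + N.indeg v := by
  simp [indeg, addRoot, Fintype.sum_option]

@[simp] theorem outdeg_addRoot_none : (N.addRoot a).outdeg none = ∑ v, a v := by
  simp [outdeg, addRoot, Fintype.sum_option]

@[simp] theorem outdeg_addRoot_some (v : N.V) :
    (N.addRoot a).outdeg (some v) = N.outdeg v := by
  simp [outdeg, addRoot, Fintype.sum_option]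

@[simp] theorem pathCount_addRoot_some (u v : N.V) :
    (N.addRoot a).pathCount (some u) (some v) = N.pathCount u v :=
  N.pathCount_map (M := N.addRoot a) some (Option.some_injective _) (fun _ _ => rfl)
    (fun _ t ht => by cases t <;> simp_all) u v

theorem pathCount_addRoot_none (v : N.V) :
    (N.addRoot a).pathCount none (some v) = ∑ w, a w * N.pathCount w v := by
  rw [pathCount_of_ne _ ((Option.some_ne_none v).symm), Fintype.sum_option]
  simp [addRoot]

theorem hybridNumber_addRoot :
    (N.addRoot a).hybridNumber = ∑ v, (a v + N.indeg v - 1) := by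
  simp [hybridNumber, Fintype.sum_option]

end addRoot

def NonrootDegrees (i o : ℕ) : Prop := (i = 1 ∧ o = 0) ∨ (i = 1 ∧ o = 2) ∨ (2 ≤ i ∧ o = 1)

theorem NonrootDegrees.one_le {i o : ℕ} (h : NonrootDegrees i o) : 1 ≤ i := by
  unfold NonrootDegrees at h; omega

def IsPhyloBelowRoot : Prop :=
  N.indeg N.root = 0 ∧ ∀ v, v ≠ N.root → NonrootDegrees (N.indeg v) (N.outdeg v)

variable {N}

theorem IsPhyloBelowRoot.addRoot (hN : N.IsPhyloBelowRoot) {a : N.V → ℕ}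
    (hroot : NonrootDegrees (a N.root) (N.outdeg N.root))
    (ha : ∀ v, v ≠ N.root → 0 < a v → N.outdeg v = 1) : (N.addRoot a).IsPhyloBelowRoot := by
  refine ⟨indeg_addRoot_none a, ?_⟩
  rintro (_ | v) hv
  · exact absurd rfl hv
  rw [indeg_addRoot_some, outdeg_addRoot_some]
  by_cases hvr : v = N.root
  · rwa [hvr, hN.1]
  rcases Nat.eq_zero_or_pos (a v) with h0 | hpos
  · rw [h0, zero_add]; exact hN.2 v hvr
  · have := (hN.2 v hvr).one_le
    exact Or.inr (Or.inr ⟨by omega, ha v hvr hpos⟩)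

theorem IsPhyloBelowRoot.hybridNumber_addRoot_add_one (hN : N.IsPhyloBelowRoot) {a : N.V → ℕ}
    (hroot : 1 ≤ a N.root) : (N.addRoot a).hybridNumber + 1 = N.hybridNumber + ∑ v, a v := by
  -- the first arc into the old root, of indegree `0`, is the one that does not count
  have key (v : N.V) :
      (a v + N.indeg v - 1) + (if v = N.root then 1 else 0) = (N.indeg v - 1) + a v := by
    split_ifs with hv
    · rw [hv, hN.1]; omega
    · have := (hN.2 v hv).one_le; omega
  rw [PhyloNet.hybridNumber_addRoot, hybridNumber, ← Finset.sum_add_distrib,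
    ← Finset.sum_congr rfl fun v _ => key v, Finset.sum_add_distrib, Fintype.sum_ite_eq']

variable (N)

def point : PhyloNet where
  V := Unit
  fin := inferInstance
  root := ()
  arcs _ _ := 0
  rank _ := 0
  rank_lt _ _ h := absurd h (lt_irrefl 0)

/-- A new root `r` and a new hybrid `h` on top of `N`, with arcs `r ⇉ h → N.root`. -/
noncomputable def double : PhyloNet := (N.addRoot (Pi.single N.root 1)).addRoot (Pi.single none 2)

noncomputable def tap (H : N.V) : PhyloNet := N.addRoot (Pi.single N.root 1 + Pi.single H 1)

/-- The one-leaf networks `B((m))` of the bound. -/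
structure IsBlock (ℓ : N.V) (m : ℕ) : Prop where
  isPhyloBelowRoot : N.IsPhyloBelowRoot
  -- the exception is the single vertex `B(1)`
  outdeg_root : N.outdeg N.root = 2 ∨ N.outdeg N.root = 0 ∧ m = 1
  outdeg_eq_zero_iff : ∀ v, N.outdeg v = 0 ↔ v = ℓ
  pathCount_root : N.pathCount N.root ℓ = m

structure IsCollector (ℓ H : N.V) : Prop where
  ne_root : H ≠ N.root
  outdeg_eq_one : N.outdeg H = 1
  pathCount_eq_one : N.pathCount H ℓ = 1

variable {N}

theorem isBlock_point : point.IsBlock () 1 where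
  isPhyloBelowRoot := ⟨by simp [indeg, point], fun _ h => absurd rfl h⟩
  outdeg_root := Or.inr ⟨by simp [outdeg, point], rfl⟩
  outdeg_eq_zero_iff _ := iff_of_true (by simp [outdeg, point]) rfl
  pathCount_root := point.pathCount_self ()

theorem hybridNumber_point : point.hybridNumber = 0 := by
  simp [hybridNumber, indeg, point]

section double

variable (N)

theorem outdeg_double_none : N.double.outdeg none = 2 := by
  unfold PhyloNet.double; rw [outdeg_addRoot_none]; simp

theorem outdeg_double_some_none : N.double.outdeg (some none) = 1 := by
  unfold PhyloNet.double; rw [outdeg_addRoot_some, outdeg_addRoot_none]; simp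

theorem outdeg_double_some_some (v : N.V) :
    N.double.outdeg (some (some v)) = N.outdeg v := by
  unfold PhyloNet.double; rw [outdeg_addRoot_some, outdeg_addRoot_some]

theorem pathCount_double_some_some (u v : N.V) :
    N.double.pathCount (some (some u)) (some (some v)) = N.pathCount u v := by
  unfold PhyloNet.double; rw [pathCount_addRoot_some, pathCount_addRoot_some]

theorem pathCount_double_some_none (v : N.V) :
    N.double.pathCount (some none) (some (some v)) = N.pathCount N.root v := by
  unfold PhyloNet.double
  rw [pathCount_addRoot_some, pathCount_addRoot_none]
  simp [Pi.single_apply]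

theorem pathCount_double_none (v : N.V) :
    N.double.pathCount none (some (some v)) = 2 * N.pathCount N.root v := by
  unfold PhyloNet.double
  rw [pathCount_addRoot_none, Fintype.sum_option, pathCount_addRoot_none]
  simp [Pi.single_apply]

variable {N} {ℓ : N.V} {m : ℕ}

theorem IsBlock.isPhyloBelowRoot_addRoot_single (hB : N.IsBlock ℓ m) :
    (N.addRoot (Pi.single N.root 1)).IsPhyloBelowRoot := by
  refine hB.isPhyloBelowRoot.addRoot ?_ fun v hv h => by simp [hv] at h
  rw [Pi.single_eq_same]
  rcases hB.outdeg_root with h | h <;> simp [NonrootDegrees, h]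

theorem IsBlock.double (hB : N.IsBlock ℓ m) : N.double.IsBlock (some (some ℓ)) (2 * m) where
  isPhyloBelowRoot := hB.isPhyloBelowRoot_addRoot_single.addRoot
    (by simp [NonrootDegrees]) fun v hv h => by simp [hv] at h
  outdeg_root := Or.inl (outdeg_double_none N)
  outdeg_eq_zero_iff := by
    rintro (_ | _ | v)
    · rw [outdeg_double_none]; simp
    · rw [outdeg_double_some_none]; exact iff_of_false one_ne_zero nofun
    · rw [outdeg_double_some_some, hB.outdeg_eq_zero_iff]
      exact ⟨congrArg (some ∘ some), fun h => by injection h with h; injection h⟩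
  pathCount_root := (pathCount_double_none N ℓ).trans (by rw [hB.pathCount_root])

theorem IsBlock.hybridNumber_double (hB : N.IsBlock ℓ m) :
    N.double.hybridNumber = N.hybridNumber + 1 := by
  have h₁ := hB.isPhyloBelowRoot.hybridNumber_addRoot_add_one (a := Pi.single N.root 1) (by simp)
  have h₂ := hB.isPhyloBelowRoot_addRoot_single.hybridNumber_addRoot_add_one
    (a := Pi.single none 2) (by simp)
  simp only [Fintype.sum_pi_single'] at h₁ h₂
  unfold PhyloNet.double
  omega

theorem IsBlock.isCollector_double (hB : N.IsBlock ℓ 1) :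
    N.double.IsCollector (some (some ℓ)) (some none) where
  ne_root := Option.some_ne_none _
  outdeg_eq_one := outdeg_double_some_none N
  pathCount_eq_one := by rw [pathCount_double_some_none, hB.pathCount_root]

theorem IsCollector.double {H : N.V} (hH : N.IsCollector ℓ H) :
    N.double.IsCollector (some (some ℓ)) (some (some H)) where
  ne_root := Option.some_ne_none _
  outdeg_eq_one := (outdeg_double_some_some N H).trans hH.outdeg_eq_one
  pathCount_eq_one := (pathCount_double_some_some N H ℓ).trans hH.pathCount_eq_one

end double

section tap

variable (N) (H : N.V)

theorem outdeg_tap_some (v : N.V) : (N.tap H).outdeg (some v) = N.outdeg v :=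
  outdeg_addRoot_some _ v

theorem outdeg_tap_none : (N.tap H).outdeg none = 2 := by
  unfold PhyloNet.tap
  rw [outdeg_addRoot_none]
  simp [Finset.sum_add_distrib]

theorem pathCount_tap_some (u v : N.V) :
    (N.tap H).pathCount (some u) (some v) = N.pathCount u v :=
  pathCount_addRoot_some _ u v

theorem pathCount_tap_none (v : N.V) :
    (N.tap H).pathCount none (some v) = N.pathCount N.root v + N.pathCount H v := by
  unfold PhyloNet.tap
  rw [pathCount_addRoot_none]
  simp [Pi.single_apply, add_mul, Finset.sum_add_distrib]

variable {N H} {ℓ : N.V} {m : ℕ}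

theorem IsBlock.tap (hB : N.IsBlock ℓ m) (hH : N.IsCollector ℓ H)
    (h2 : N.outdeg N.root = 2) : (N.tap H).IsBlock (some ℓ) (m + 1) where
  isPhyloBelowRoot := hB.isPhyloBelowRoot.addRoot
    (by simp [hH.ne_root.symm, NonrootDegrees, h2])
    fun v hv h => by
      obtain rfl : v = H := by by_contra hvH; simp [hv, hvH] at h
      exact hH.outdeg_eq_one
  outdeg_root := Or.inl (outdeg_tap_none N H)
  outdeg_eq_zero_iff := by
    rintro (_ | v)
    · rw [outdeg_tap_none N H]; exact iff_of_false two_ne_zero nofun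
    · rw [outdeg_tap_some, hB.outdeg_eq_zero_iff]
      exact ⟨congrArg some, fun h => Option.some_injective _ h⟩
  pathCount_root :=
    (pathCount_tap_none N H ℓ).trans (by rw [hB.pathCount_root, hH.pathCount_eq_one])

theorem IsBlock.hybridNumber_tap (hB : N.IsBlock ℓ m) (hH : N.IsCollector ℓ H) :
    (N.tap H).hybridNumber = N.hybridNumber + 1 := by
  have := hB.isPhyloBelowRoot.hybridNumber_addRoot_add_one
    (a := Pi.single N.root 1 + Pi.single H 1) (by simp [hH.ne_root.symm])
  simp only [Pi.add_apply, Finset.sum_add_distrib, Fintype.sum_pi_single'] at this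
  unfold PhyloNet.tap
  omega

theorem IsCollector.tap (hH : N.IsCollector ℓ H) : (N.tap H).IsCollector (some ℓ) (some H) where
  ne_root := Option.some_ne_none _
  outdeg_eq_one := (outdeg_tap_some N H H).trans hH.outdeg_eq_one
  pathCount_eq_one := (pathCount_tap_some N H H ℓ).trans hH.pathCount_eq_one

end tap

theorem log_add_digits_sum_two_mul_add {k b : ℕ} (hk : 1 ≤ k) (hb : b < 2) :
    Nat.log 2 (2 * k + b) + (Nat.digits 2 (2 * k + b)).sum =
      Nat.log 2 k + (Nat.digits 2 k).sum + 1 + b := by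
  have hdiv : (2 * k + b) / 2 = k := by omega
  rw [Nat.log_of_one_lt_of_le one_lt_two (by omega), Nat.digits_def' one_lt_two (by omega),
    List.sum_cons, hdiv, show (2 * k + b) % 2 = b by omega]
  ring

theorem exists_isBlock (m : ℕ) (hm : 1 ≤ m) :
    ∃ (N : PhyloNet) (ℓ : N.V), N.IsBlock ℓ m ∧
      N.hybridNumber + 1 = Nat.log 2 m + (Nat.digits 2 m).sum ∧
      (2 ≤ m → ∃ H, N.IsCollector ℓ H) := by
  induction m using Nat.strong_induction_on with
  | _ m ih =>
  rcases hm.eq_or_lt with rfl | hm2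
  · exact ⟨point, (), isBlock_point, by simp [hybridNumber_point], by omega⟩
  obtain ⟨k, b, hb, rfl⟩ : ∃ k b, b < 2 ∧ m = 2 * k + b :=
    ⟨m / 2, m % 2, Nat.mod_lt _ two_pos, (Nat.div_add_mod m 2).symm⟩
  have hk : 1 ≤ k := by omega
  obtain ⟨N, ℓ, hB, hh, hcol⟩ := ih k (by omega) hk
  have hlog := log_add_digits_sum_two_mul_add hk hb
  obtain ⟨H, hH⟩ : ∃ H, N.double.IsCollector (some (some ℓ)) H := by
    rcases hk.eq_or_lt with rfl | h2
    · exact ⟨_, hB.isCollector_double⟩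
    · obtain ⟨H, hH⟩ := hcol h2
      exact ⟨_, hH.double⟩
  interval_cases b
  · exact ⟨_, _, hB.double, by rw [hB.hybridNumber_double]; omega, fun _ => ⟨H, hH⟩⟩
  · refine ⟨_, _, hB.double.tap hH (outdeg_double_none N), ?_, fun _ => ⟨_, hH.tap⟩⟩
    rw [hB.double.hybridNumber_tap hH, hB.hybridNumber_double]
    omega

section join

variable (N) (M : PhyloNet)

noncomputable abbrev join : PhyloNet where
  V := Option (N.V ⊕ M.V)
  fin := inferInstance
  root := none
  arcs
    | none, some (.inl x) => if x = N.root then 1 else 0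
    | none, some (.inr y) => if y = M.root then 1 else 0
    | some (.inl x), some (.inl x') => N.arcs x x'
    | some (.inr y), some (.inr y') => M.arcs y y'
    | _, _ => 0
  rank
    | none => 0
    | some (.inl x) => N.rank x + 1
    | some (.inr y) => M.rank y + 1
  rank_lt
    | none, some (.inl _), _ | none, some (.inr _), _ => Nat.succ_pos _
    | some (.inl x), some (.inl x'), h => Nat.succ_lt_succ (N.rank_lt x x' h)
    | some (.inr y), some (.inr y'), h => Nat.succ_lt_succ (M.rank_lt y y' h)

@[simp] theorem indeg_join_inl (x : N.V) :
    (N.join M).indeg (some (.inl x)) = (if x = N.root then 1 else 0) + N.indeg x := by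
  simp [indeg, Fintype.sum_option]

@[simp] theorem indeg_join_inr (y : M.V) :
    (N.join M).indeg (some (.inr y)) = (if y = M.root then 1 else 0) + M.indeg y := by
  simp [indeg, Fintype.sum_option]

@[simp] theorem outdeg_join_none : (N.join M).outdeg none = 2 := by
  simp [outdeg, Fintype.sum_option]

@[simp] theorem outdeg_join_inl (x : N.V) : (N.join M).outdeg (some (.inl x)) = N.outdeg x := by
  simp [outdeg, Fintype.sum_option]

@[simp] theorem outdeg_join_inr (y : M.V) : (N.join M).outdeg (some (.inr y)) = M.outdeg y := by
  simp [outdeg, Fintype.sum_option]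

theorem pathCount_join_inl (u v : N.V) :
    (N.join M).pathCount (some (.inl u)) (some (.inl v)) = N.pathCount u v :=
  N.pathCount_map (M := N.join M) (some ∘ .inl) ((Option.some_injective _).comp Sum.inl_injective)
    (fun _ _ => rfl) (fun _ t ht => by rcases t with _ | _ | _ <;> simp_all) u v

theorem pathCount_join_inr (u v : M.V) :
    (N.join M).pathCount (some (.inr u)) (some (.inr v)) = M.pathCount u v :=
  M.pathCount_map (M := N.join M) (some ∘ .inr) ((Option.some_injective _).comp Sum.inr_injective)
    (fun _ _ => rfl) (fun _ t ht => by rcases t with _ | _ | _ <;> simp_all) u v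

theorem pathCount_join_root_inl (v : N.V) :
    (N.join M).pathCount none (some (.inl v)) = N.pathCount N.root v := by
  have hcross (y : M.V) : (N.join M).pathCount (some (.inr y)) (some (.inl v)) = 0 :=
    pathCount_eq_zero_of_closed _ {t | ∃ y, t = some (.inr y)}
      (by rintro _ ⟨y, rfl⟩ (_ | _ | y') h <;> simp_all) ⟨y, rfl⟩ (by simp)
  rw [pathCount_of_ne _ (Option.some_ne_none _).symm, Fintype.sum_option, Fintype.sum_sum_type]
  simp [hcross, pathCount_join_inl]

theorem pathCount_join_root_inr (v : M.V) :
    (N.join M).pathCount none (some (.inr v)) = M.pathCount M.root v := by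
  have hcross (x : N.V) : (N.join M).pathCount (some (.inl x)) (some (.inr v)) = 0 :=
    pathCount_eq_zero_of_closed _ {t | ∃ x, t = some (.inl x)}
      (by rintro _ ⟨x, rfl⟩ (_ | x' | _) h <;> simp_all) ⟨x, rfl⟩ (by simp)
  rw [pathCount_of_ne _ (Option.some_ne_none _).symm, Fintype.sum_option, Fintype.sum_sum_type]
  simp [hcross, pathCount_join_inr]

@[simp] theorem indeg_join_none : (N.join M).indeg none = 0 := by
  simp [indeg]

variable {N M}

theorem IsPhyloBelowRoot.join (hN : N.IsPhyloBelowRoot) (hM : M.IsPhyloBelowRoot)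
    (hNr : NonrootDegrees 1 (N.outdeg N.root)) (hMr : NonrootDegrees 1 (M.outdeg M.root)) :
    (N.join M).IsPhyloBelowRoot := by
  refine ⟨indeg_join_none N M, ?_⟩
  rintro (_ | x | y) hv
  · exact absurd rfl hv
  · rw [indeg_join_inl, outdeg_join_inl]
    by_cases hx : x = N.root
    · simpa [hx, hN.1] using hNr
    · simpa [hx] using hN.2 x hx
  · rw [indeg_join_inr, outdeg_join_inr]
    by_cases hy : y = M.root
    · simpa [hy, hM.1] using hMr
    · simpa [hy] using hM.2 y hy

theorem hybridNumber_join (hN : N.indeg N.root = 0) (hM : M.indeg M.root = 0) :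
    (N.join M).hybridNumber = N.hybridNumber + M.hybridNumber := by
  rw [hybridNumber, Fintype.sum_option, Fintype.sum_sum_type, indeg_join_none, zero_tsub,
    zero_add]
  congr 1 <;> refine Finset.sum_congr rfl fun v _ => ?_
  · by_cases hv : v = N.root <;> simp [hv, hN]
  · by_cases hv : v = M.root <;> simp [hv, hM]

end join

variable (N) in
structure RealizesAtSinks {n : ℕ} (x : Fin n → N.V) (m : Fin n → ℕ) : Prop where
  isPhyloBelowRoot : N.IsPhyloBelowRoot
  outdeg_root : N.outdeg N.root = 2 ∨ N.outdeg N.root = 0 ∧ ∑ i, m i = 1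
  injective : Function.Injective x
  outdeg_eq_zero_iff : ∀ v, N.outdeg v = 0 ↔ ∃ i, x i = v
  pathCount_root : ∀ i, N.pathCount N.root (x i) = m i

variable {n : ℕ} {ℓ : N.V}

theorem IsBlock.realizesAtSinks {m : ℕ} (hB : N.IsBlock ℓ m) :
    N.RealizesAtSinks (fun _ : Fin 1 => ℓ) (fun _ => m) where
  isPhyloBelowRoot := hB.isPhyloBelowRoot
  outdeg_root := by simpa using hB.outdeg_root
  injective a b _ := Subsingleton.elim a b
  outdeg_eq_zero_iff v := by simp [hB.outdeg_eq_zero_iff, eq_comm]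
  pathCount_root _ := hB.pathCount_root

theorem nonrootDegrees_one_of_outdeg {o : ℕ} {P : Prop} (h : o = 2 ∨ o = 0 ∧ P) :
    NonrootDegrees 1 o := by
  unfold NonrootDegrees; omega

theorem IsBlock.join {M : PhyloNet} {m₀ : ℕ} {y : Fin n → M.V} {ν : Fin n → ℕ}
    (hB : N.IsBlock ℓ m₀) (hM : M.RealizesAtSinks y ν) :
    (N.join M).RealizesAtSinks (Fin.cons (some (.inl ℓ)) fun i => some (.inr (y i)))
      (Fin.cons m₀ ν) where
  isPhyloBelowRoot := hB.isPhyloBelowRoot.join hM.isPhyloBelowRoot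
    (nonrootDegrees_one_of_outdeg hB.outdeg_root) (nonrootDegrees_one_of_outdeg hM.outdeg_root)
  outdeg_root := Or.inl (outdeg_join_none N M)
  injective := Fin.cons_injective_iff.2
    ⟨by simp, ((Option.some_injective _).comp Sum.inr_injective).comp hM.injective⟩
  outdeg_eq_zero_iff := by
    rintro (_ | x | z)
    · simp [Fin.exists_fin_succ]
    · simp [hB.outdeg_eq_zero_iff, Fin.exists_fin_succ, eq_comm]
    · simp [hM.outdeg_eq_zero_iff, Fin.exists_fin_succ]
  pathCount_root := Fin.cases (by simp [pathCount_join_root_inl, hB.pathCount_root])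
    fun i => by simp [pathCount_join_root_inr, hM.pathCount_root]

theorem RealizesAtSinks.isPhylo_realizes {x : Fin n → N.V} {m : Fin n → ℕ}
    (h : N.RealizesAtSinks x m) (h2 : 2 ≤ ∑ i, m i) : N.IsPhylo ∧ N.Realizes m := by
  have hout : N.outdeg N.root = 2 := h.outdeg_root.resolve_right (by omega)
  have hleaf (v : N.V) : N.IsLeaf v ↔ N.outdeg v = 0 := by
    refine ⟨And.right, fun hv => ⟨?_, hv⟩⟩
    have hvr : v ≠ N.root := by rintro rfl; omega
    have := h.isPhyloBelowRoot.2 v hvr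
    unfold NonrootDegrees at this; omega
  exact ⟨⟨h.isPhyloBelowRoot.1, hout, h.isPhyloBelowRoot.2⟩,
    x, h.injective, fun v => (hleaf v).trans (h.outdeg_eq_zero_iff v), h.pathCount_root⟩

theorem exists_realizesAtSinks {k : ℕ} (m : Fin (k + 1) → ℕ) (hm : ∀ i, 1 ≤ m i) :
    ∃ (N : PhyloNet) (x : Fin (k + 1) → N.V), N.RealizesAtSinks x m ∧
      N.hybridNumber = ∑ i, (Nat.log 2 (m i) + (Nat.digits 2 (m i)).sum - 1) := by
  induction k with
  | zero =>
    obtain ⟨N, ℓ, hB, hh, -⟩ := exists_isBlock (m 0) (hm 0)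
    refine ⟨N, fun _ => ℓ, ?_, by simp; omega⟩
    convert hB.realizesAtSinks using 1
    exact funext fun i => by rw [Fin.fin_one_eq_zero i]
  | succ k ih =>
    obtain ⟨N, ℓ, hB, hh, -⟩ := exists_isBlock (m 0) (hm 0)
    obtain ⟨M, y, hM, hMh⟩ := ih (Fin.tail m) (fun i => hm _)
    refine ⟨N.join M, _, Fin.cons_self_tail m ▸ hB.join hM, ?_⟩
    rw [hybridNumber_join hB.isPhyloBelowRoot.1 hM.isPhyloBelowRoot.1, Fin.sum_univ_succ, hMh]
    simp [Fin.tail]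
    omega

theorem sum_pathCount_of_ne {x : Fin n → N.V} {v : N.V} (hv : ∀ i, v ≠ x i) :
    ∑ i, N.pathCount v (x i) = ∑ w, N.arcs v w * ∑ i, N.pathCount w (x i) := by
  simp only [Finset.mul_sum]
  rw [Finset.sum_comm]
  exact Finset.sum_congr rfl fun i _ => N.pathCount_of_ne (hv i)

theorem outdeg_le_sum_arcs_mul {f : N.V → ℕ} {v : N.V} (hf : ∀ w, 0 < N.arcs v w → 1 ≤ f w) :
    N.outdeg v ≤ ∑ w, N.arcs v w * f w := by
  refine Finset.sum_le_sum fun w _ => ?_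
  rcases Nat.eq_zero_or_pos (N.arcs v w) with h | h
  · simp [h]
  · exact Nat.le_mul_of_pos_right _ (hf w h)

theorem IsPhylo.one_le_outdeg (hN : N.IsPhylo) {v : N.V} (hv : ¬N.IsLeaf v) : 1 ≤ N.outdeg v := by
  by_cases hvr : v = N.root
  · rw [hvr, hN.2.1]; omega
  · rcases hN.2.2 v hvr with h | h | h
    · exact absurd h hv
    all_goals omega

theorem IsPhylo.two_le_sum {m : Fin n → ℕ} (hN : N.IsPhylo) (hr : N.Realizes m) :
    2 ≤ ∑ i, m i := by
  obtain ⟨x, -, hleaf, hpc⟩ := hr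
  have hne {v : N.V} (hv : ¬N.IsLeaf v) (i : Fin n) : v ≠ x i :=
    fun h => hv ((hleaf v).2 ⟨i, h.symm⟩)
  have one_le (v : N.V) : 1 ≤ ∑ i, N.pathCount v (x i) := by
    induction v using N.induction_arcs with
    | h v ih =>
      by_cases hv : N.IsLeaf v
      · obtain ⟨i, rfl⟩ := (hleaf _).1 hv
        exact (N.pathCount_self (x i)).ge.trans
          (Finset.single_le_sum (f := fun j => N.pathCount (x i) (x j)) (fun _ _ => Nat.zero_le _)
            (Finset.mem_univ i))
      rw [sum_pathCount_of_ne (hne hv)]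
      exact (hN.one_le_outdeg hv).trans (outdeg_le_sum_arcs_mul ih)
  have hroot : ¬N.IsLeaf N.root := fun h => by have := h.1; rw [hN.1] at this; omega
  calc 2 = N.outdeg N.root := hN.2.1.symm
    _ ≤ ∑ w, N.arcs N.root w * ∑ i, N.pathCount w (x i) :=
      outdeg_le_sum_arcs_mul fun w _ => one_le w
    _ = ∑ i, m i := by
      rw [← sum_pathCount_of_ne (hne hroot)]
      exact Finset.sum_congr rfl fun i _ => hpc i

end PhyloNet

theorem stmt8_general (n : ℕ) (m : Fin n → ℕ) (hm : ∀ i, 1 ≤ m i) :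
    PhyloNet.profileHybridNumber m ≤
      ∑ k, (Nat.log 2 (m k) + (Nat.digits 2 (m k)).sum - 1) := by
  by_cases h2 : 2 ≤ ∑ i, m i
  · obtain _ | k := n
    · simp at h2
    obtain ⟨N, x, hx, hh⟩ := PhyloNet.exists_realizesAtSinks m hm
    obtain ⟨hN, hr⟩ := hx.isPhylo_realizes h2
    exact Nat.sInf_le ⟨N, hN, hr, hh⟩
  · have : {h | ∃ N : PhyloNet, N.IsPhylo ∧ N.Realizes m ∧ N.hybridNumber = h} = ∅ :=
      Set.eq_empty_of_forall_notMem fun _ ⟨_, hN, hr, _⟩ => h2 (hN.two_le_sum hr)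
    rw [PhyloNet.profileHybridNumber, this, Nat.sInf_empty]
    exact Nat.zero_le _

/-- the hybrid number of a ploidy profile `m⃗ = (m₁,…,mₙ)` (the minimum of
`∑_{v hybrid} (indeg v − 1)` over all phylogenetic networks realizing `m⃗`) satisfies
`h(m⃗) ≤ ∑ₖ (⌊log₂ mₖ⌋ + s₂(mₖ) − 1)`; terms with `mₖ = 1` contribute `0`. -/
theorem stmt8 (n : ℕ) (hn : 1 ≤ n) (m : Fin n → ℕ) (hm : ∀ i, 1 ≤ m i)
    (hdesc : Antitone m) :
    PhyloNet.profileHybridNumber m ≤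
      ∑ k, (Nat.log 2 (m k) + (Nat.digits 2 (m k)).sum - 1) :=
  stmt8_general n m hm
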